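/- Let A ∈ ℝ^{n×n}, B ∈ ℝ^{n×m}, and let X ∈ ℝ^{n×n} be symmetric positive definite with X = AᵀXA and I_m − BᵀXB positive semidefinite. Set F = BᵀXA and G(z) = F(zI − A)^{−1}B. Then for every z ∈ ℂ with |z| > 1, the matrix zI − A is invertible and the Hermitian matrix G(z)* + G(z) + I_m is positive semidefinite; that is, G(z) + (1/2)I_m is positive real on |z| > 1. -/

import Mathlib

/-!
Complexify and put `M = z • 1 - A`, `w = M⁻¹ B u`, so that `B u = z w - A w`. An eigenvector
`A v = z v` would give `v* X v = |z|² v* X v`, so `M` is invertible when `|z| ≠ 1`. Since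
`u* G u = (B u)* X (A w)`, completing the square in `z w = B u + A w` and `A* X A = X` give
`(B u)* X (B u) + 2 Re u* G u = (|z|² - 1) w* X w ≥ 0`, while `1 - B* X B ⪰ 0` bounds
`(B u)* X (B u)` by `u* u`.
-/

open Matrix
open scoped ComplexOrder

namespace Matrix

variable {ι κ μ : Type*}

theorem map_ofReal_mul [Fintype ι] (P : Matrix κ ι ℝ) (Q : Matrix ι μ ℝ) :
    (P * Q).map Complex.ofReal = P.map Complex.ofReal * Q.map Complex.ofReal :=
  Matrix.map_mul (f := Complex.ofRealHom)

theorem conjTranspose_map_ofReal (P : Matrix κ ι ℝ) :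
    (P.map Complex.ofReal)ᴴ = Pᵀ.map Complex.ofReal := by
  rw [← conjTranspose_map _ fun _ => (Complex.conj_ofReal _).symm,
    conjTranspose_eq_transpose_of_trivial]

open scoped MatrixOrder in
theorem PosSemidef.map_ofReal [Fintype ι] {M : Matrix ι ι ℝ} (hM : M.PosSemidef) :
    (M.map Complex.ofReal).PosSemidef := by
  classical
  obtain ⟨C, rfl⟩ := CStarAlgebra.nonneg_iff_eq_star_mul_self.mp hM.nonneg
  rw [star_eq_conjTranspose, map_ofReal_mul, conjTranspose_eq_transpose_of_trivial,
    ← conjTranspose_map_ofReal]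
  exact posSemidef_conjTranspose_mul_self _

theorem PosDef.map_ofReal [Fintype ι] [DecidableEq ι] {M : Matrix ι ι ℝ} (hM : M.PosDef) :
    (M.map Complex.ofReal).PosDef := by
  rw [hM.posSemidef.map_ofReal.posDef_iff_det_ne_zero]
  have hdet : (M.map Complex.ofReal).det = M.det := (Complex.ofRealHom.map_det M).symm
  rw [hdet]
  exact_mod_cast hM.det_pos.ne'

section Quadratic

variable {R : Type*} [CommRing R] [StarRing R]

theorem star_mulVec_dotProduct_mulVec [Fintype ι] [Fintype κ] [Fintype μ]
    (B : Matrix ι κ R) (X : Matrix ι ι R) (C : Matrix ι μ R) (u : κ → R) (w : μ → R) :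
    star u ⬝ᵥ ((Bᴴ * X * C) *ᵥ w) = star (B *ᵥ u) ⬝ᵥ (X *ᵥ (C *ᵥ w)) := by
  rw [← mulVec_mulVec, ← mulVec_mulVec, dotProduct_mulVec, star_mulVec]

theorem star_dotProduct_mulVec [Fintype ι] (M : Matrix ι ι R) (x y : ι → R) :
    star (star x ⬝ᵥ (M *ᵥ y)) = star y ⬝ᵥ (Mᴴ *ᵥ x) := by
  rw [star_dotProduct, star_star, dotProduct_mulVec, ← star_mulVec]

end Quadratic

theorem isUnit_smul_one_sub_of_conjTranspose_mul_mul_eq [Fintype ι] [DecidableEq ι]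
    {A X : Matrix ι ι ℂ} (hX : X.PosDef) (hXA : Aᴴ * X * A = X) {z : ℂ} (hz : ‖z‖ ≠ 1) :
    IsUnit (z • 1 - A) := by
  rw [isUnit_iff_isUnit_det, isUnit_iff_ne_zero]
  intro hdet
  obtain ⟨v, hv, hAv⟩ := exists_mulVec_eq_zero_iff.mpr hdet
  rw [sub_mulVec, smul_mulVec, one_mulVec, sub_eq_zero] at hAv
  have hq : (‖z‖ ^ 2 : ℂ) * (star v ⬝ᵥ (X *ᵥ v)) = 1 * (star v ⬝ᵥ (X *ᵥ v)) := by
    calc (‖z‖ ^ 2 : ℂ) * (star v ⬝ᵥ (X *ᵥ v)) = star (z • v) ⬝ᵥ (X *ᵥ (z • v)) := by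
          rw [star_smul, mulVec_smul, smul_dotProduct, dotProduct_smul, smul_eq_mul, smul_eq_mul,
            ← mul_assoc, Complex.star_def, Complex.conj_mul']
      _ = 1 * (star v ⬝ᵥ (X *ᵥ v)) := by
          rw [hAv, ← star_mulVec_dotProduct_mulVec, hXA, one_mul]
  have hnorm : ‖z‖ ^ 2 = 1 := by
    exact_mod_cast mul_right_cancel₀ (hX.dotProduct_mulVec_pos hv).ne' hq
  exact hz ((pow_eq_one_iff_of_nonneg (norm_nonneg z) two_ne_zero).mp hnorm)

theorem posSemidef_transfer_conjTranspose_add_add_one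
    [Fintype ι] [Fintype κ] [DecidableEq ι] [DecidableEq κ]
    {A X : Matrix ι ι ℂ} {B : Matrix ι κ ℂ} (hX : X.PosSemidef) (hXA : Aᴴ * X * A = X)
    (hXB : (1 - Bᴴ * X * B).PosSemidef) {z : ℂ} (hz : 1 ≤ ‖z‖) (hM : IsUnit (z • 1 - A)) :
    ((Bᴴ * X * A * (z • 1 - A)⁻¹ * B)ᴴ + Bᴴ * X * A * (z • 1 - A)⁻¹ * B + 1).PosSemidef := by
  set G := Bᴴ * X * A * (z • 1 - A)⁻¹ * B
  refine .of_dotProduct_mulVec_nonneg (by simp [IsHermitian, add_comm]) fun u => ?_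
  set w := (z • 1 - A)⁻¹ *ᵥ (B *ᵥ u) with hw
  have hzw : z • w = B *ᵥ u + A *ᵥ w := by
    have h : (z • 1 - A) *ᵥ w = B *ᵥ u := by
      rw [hw, mulVec_mulVec, mul_nonsing_inv _ ((isUnit_iff_isUnit_det _).mp hM), one_mulVec]
    rw [sub_mulVec, smul_mulVec, one_mulVec] at h
    exact eq_add_of_sub_eq h
  have hGu : star u ⬝ᵥ (G *ᵥ u) = star (B *ᵥ u) ⬝ᵥ (X *ᵥ (A *ᵥ w)) := by
    rw [show G *ᵥ u = (Bᴴ * X * A) *ᵥ w by simp only [G, hw, mulVec_mulVec, Matrix.mul_assoc],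
      star_mulVec_dotProduct_mulVec]
  have hGHu : star u ⬝ᵥ (Gᴴ *ᵥ u) = star (A *ᵥ w) ⬝ᵥ (X *ᵥ (B *ᵥ u)) := by
    rw [← star_dotProduct_mulVec, hGu, star_dotProduct_mulVec, hX.isHermitian.eq]
  have hBu : star (B *ᵥ u) ⬝ᵥ (X *ᵥ (B *ᵥ u)) ≤ star u ⬝ᵥ u := by
    have h := hXB.dotProduct_mulVec_nonneg u
    rwa [sub_mulVec, one_mulVec, dotProduct_sub, star_mulVec_dotProduct_mulVec, sub_nonneg] at h
  have hAw : star (A *ᵥ w) ⬝ᵥ (X *ᵥ (A *ᵥ w)) = star w ⬝ᵥ (X *ᵥ w) := by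
    rw [← star_mulVec_dotProduct_mulVec, hXA]
  calc (0 : ℂ) ≤ ((‖z‖ ^ 2 - 1 : ℝ) : ℂ) * (star w ⬝ᵥ (X *ᵥ w)) :=
        mul_nonneg (by norm_cast; nlinarith [norm_nonneg z]) (hX.dotProduct_mulVec_nonneg w)
    _ = star (z • w) ⬝ᵥ (X *ᵥ (z • w)) - star (A *ᵥ w) ⬝ᵥ (X *ᵥ (A *ᵥ w)) := by
        rw [hAw, star_smul, mulVec_smul, smul_dotProduct, dotProduct_smul, smul_eq_mul,
          smul_eq_mul, ← mul_assoc, Complex.star_def, Complex.conj_mul']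
        push_cast
        ring
    _ = star (B *ᵥ u) ⬝ᵥ (X *ᵥ (B *ᵥ u)) +
          (star (B *ᵥ u) ⬝ᵥ (X *ᵥ (A *ᵥ w)) + star (A *ᵥ w) ⬝ᵥ (X *ᵥ (B *ᵥ u))) := by
        rw [hzw]
        simp only [star_add, mulVec_add, dotProduct_add, add_dotProduct]
        ring
    _ ≤ star u ⬝ᵥ u + (star (B *ᵥ u) ⬝ᵥ (X *ᵥ (A *ᵥ w)) + star (A *ᵥ w) ⬝ᵥ (X *ᵥ (B *ᵥ u))) :=
        add_le_add_left hBu _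
    _ = star u ⬝ᵥ ((Gᴴ + G + 1) *ᵥ u) := by
        rw [add_mulVec, add_mulVec, one_mulVec, dotProduct_add, dotProduct_add, hGu, hGHu]
        ring

end Matrix

/-- Lemma 2 (positive-real claim): with `X ≻ 0`, `X = AᵀXA`,
`I − BᵀXB ⪰ 0` and `F = BᵀXA`, for every `|z| > 1` the matrix `zI − A` is
invertible and `G(z)* + G(z) + I ⪰ 0`, i.e., `G(z) + ½I` is positive real. -/
theorem stmt6 (n m : ℕ)
    (A : Matrix (Fin n) (Fin n) ℝ) (B : Matrix (Fin n) (Fin m) ℝ)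
    (X : Matrix (Fin n) (Fin n) ℝ) (hX : X.PosDef) (hXA : X = Aᵀ * X * A)
    (hXB : ((1 : Matrix (Fin m) (Fin m) ℝ) - Bᵀ * X * B).PosSemidef)
    (F : Matrix (Fin m) (Fin n) ℝ) (hF : F = Bᵀ * X * A)
    (Ac : Matrix (Fin n) (Fin n) ℂ) (hAc : Ac = A.map Complex.ofReal)
    (Bc : Matrix (Fin n) (Fin m) ℂ) (hBc : Bc = B.map Complex.ofReal)
    (Fc : Matrix (Fin m) (Fin n) ℂ) (hFc : Fc = F.map Complex.ofReal) :
    ∀ z : ℂ, 1 < ‖z‖ →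
      IsUnit (z • (1 : Matrix (Fin n) (Fin n) ℂ) - Ac) ∧
      ((Fc * (z • (1 : Matrix (Fin n) (Fin n) ℂ) - Ac)⁻¹ * Bc)ᴴ +
        Fc * (z • (1 : Matrix (Fin n) (Fin n) ℂ) - Ac)⁻¹ * Bc +
        (1 : Matrix (Fin m) (Fin m) ℂ)).PosSemidef := by
  intro z hz
  subst hFc hF
  set Xc := X.map Complex.ofReal
  have hXAc : Acᴴ * Xc * Ac = Xc := by
    rw [hAc, conjTranspose_map_ofReal, ← map_ofReal_mul, ← map_ofReal_mul, ← hXA]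
  have hXBc : (1 - Bcᴴ * Xc * Bc).PosSemidef := by
    rw [hBc, conjTranspose_map_ofReal, ← map_ofReal_mul, ← map_ofReal_mul,
      ← Matrix.map_one _ Complex.ofReal_zero Complex.ofReal_one,
      ← Matrix.map_sub _ Complex.ofReal_sub]
    exact hXB.map_ofReal
  have hFc : (Bᵀ * X * A).map Complex.ofReal = Bcᴴ * Xc * Ac := by
    rw [hAc, hBc, map_ofReal_mul, map_ofReal_mul, conjTranspose_map_ofReal]
  have hM := isUnit_smul_one_sub_of_conjTranspose_mul_mul_eq hX.map_ofReal hXAc hz.ne'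
  rw [hFc]
  exact ⟨hM, posSemidef_transfer_conjTranspose_add_add_one hX.posSemidef.map_ofReal hXAc hXBc
    hz.le hM⟩
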